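/- Let n ≥ 5, α = (n-2)/(n-1), β = (n-2)/(3n-5), δ = 2(n-2)√(2n-3)/(n-1)², and λ > 0. Define Γ = [4(n-2) / ((α+β)^α ((n-1)δ)^(2-α))] · [(α+1)/α] · [((α+1)β/α²)^α] · λ. Then Γ > (2/3)√n · λ. -/

import Mathlib

set_option maxHeartbeats 1600000

theorem stmt_6 (n : ℕ) (hn : 5 ≤ n) (lam : ℝ) (hlam : 0 < lam) :
    let α : ℝ := ((n : ℝ) - 2) / ((n : ℝ) - 1)
    let β : ℝ := ((n : ℝ) - 2) / (3 * (n : ℝ) - 5)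
    let δ : ℝ := 2 * ((n : ℝ) - 2) * Real.sqrt (2 * (n : ℝ) - 3) / ((n : ℝ) - 1) ^ 2
    4 * ((n : ℝ) - 2) / ((α + β) ^ α * ((((n : ℝ) - 1) * δ) ^ ((2 : ℝ) - α))) *
        ((α + 1) / α) * (((α + 1) * β / α ^ 2) ^ α) * lam
      > 2 / 3 * Real.sqrt n * lam := by
  intro α β δ
  have hα : α = ((n:ℝ)-2)/((n:ℝ)-1) := rfl
  have hβ : β = ((n:ℝ)-2)/(3*(n:ℝ)-5) := rfl
  have hδ : δ = 2*((n:ℝ)-2)*Real.sqrt (2*(n:ℝ)-3)/((n:ℝ)-1)^2 := rfl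
  clear_value α β δ
  have hx : (5:ℝ) ≤ (n:ℝ) := by exact_mod_cast hn
  set x : ℝ := (n:ℝ) with hxdef
  have h1 : (0:ℝ) < x - 1 := by linarith
  have h2 : (0:ℝ) < x - 2 := by linarith
  have h3 : (0:ℝ) < 3*x - 5 := by linarith
  have h4 : (0:ℝ) < 2*x - 3 := by linarith
  set s : ℝ := Real.sqrt (2*x - 3) with hsdef
  have hs2 : s^2 = 2*x - 3 := Real.sq_sqrt (by linarith)
  have hs0 : 0 < s := Real.sqrt_pos.2 (by linarith)
  have hsge2 : 2 < s := by nlinarith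
  set t : ℝ := Real.sqrt x with htdef
  have ht2 : t^2 = x := Real.sq_sqrt (by linarith)
  have ht0 : 0 < t := Real.sqrt_pos.2 (by linarith)
  have hα0 : 0 < α := by rw [hα]; positivity
  have hα1 : α < 1 := by rw [hα, div_lt_one h1]; linarith
  -- value equalities
  have hDval : (x-1)*δ = 2*(x-2)*s/(x-1) := by
    rw [hδ]; field_simp
  have hAval : α + β = 2*(x-2)*(2*x-3)/((x-1)*(3*x-5)) := by
    rw [hα, hβ, div_add_div _ _ h1.ne' h3.ne', div_eq_div_iff (mul_pos h1 h3).ne' (mul_pos h1 h3).ne']; ring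
  have hbval : (α+1)*β/α^2 = (2*x-3)*(x-1)/((3*x-5)*(x-2)) := by
    rw [hα, hβ]; field_simp; ring
  have hqval : (α+1)/α = (2*x-3)/(x-2) := by
    rw [hα]; field_simp; ring
  -- positivity
  have hD0 : 0 < (x-1)*δ := by rw [hDval]; positivity
  have hD1 : 1 ≤ (x-1)*δ := by
    rw [hDval, le_div_iff₀ h1]
    nlinarith
  have hA1 : 1 ≤ α + β := by
    rw [hAval, le_div_iff₀ (by positivity)]
    nlinarith
  have hb0 : 0 < (α+1)*β/α^2 := by rw [hbval]; positivity
  have hb1 : (α+1)*β/α^2 ≤ 1 := by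
    rw [hbval, div_le_one (by positivity)]
    nlinarith [mul_nonneg (show (0:ℝ) ≤ x-5 by linarith) (show (0:ℝ) ≤ x-1 by linarith)]
  -- rpow bounds
  have hP1 : (α+β)^α ≤ α+β := by
    calc (α+β)^α ≤ (α+β)^(1:ℝ) :=
          Real.rpow_le_rpow_of_exponent_le hA1 hα1.le
      _ = α+β := Real.rpow_one _
  have hBle : (α+1)*β/α^2 ≤ ((α+1)*β/α^2)^α := by
    calc (α+1)*β/α^2 = ((α+1)*β/α^2)^(1:ℝ) := (Real.rpow_one _).symm
      _ ≤ ((α+1)*β/α^2)^α :=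
          Real.rpow_le_rpow_of_exponent_ge hb0 hb1 hα1.le
  set C : ℝ := 1 + (1/(x-1))*((x-1)*δ - 1) with hCdef
  have hC0 : 0 < C := by
    rw [hCdef]
    have : 0 ≤ (1/(x-1))*((x-1)*δ - 1) := by
      apply mul_nonneg (by positivity); linarith
    linarith
  have hexp : (2:ℝ) - α = 1 + 1/(x-1) := by
    rw [hα]; field_simp; ring
  have hP2 : ((x-1)*δ)^((2:ℝ)-α) ≤ ((x-1)*δ) * C := by
    rw [hexp, Real.rpow_add hD0, Real.rpow_one]
    have bern := rpow_one_add_le_one_add_mul_self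
      (s := (x-1)*δ - 1) (p := 1/(x-1)) (by linarith) (by positivity)
      (by rw [div_le_one h1]; linarith)
    have h15 : (1:ℝ) + ((x-1)*δ - 1) = (x-1)*δ := by ring
    rw [h15] at bern
    rw [hCdef]
    exact mul_le_mul_of_nonneg_left bern hD0.le
  have hCval : C = (x-2)*((x-1)+2*s)/(x-1)^2 := by
    rw [hCdef, hDval]; field_simp; ring
  -- positivity of the rpow denominators
  have hApow0 : 0 < (α+β)^α := Real.rpow_pos_of_pos (by linarith) _
  have hDpow0 : 0 < ((x-1)*δ)^((2:ℝ)-α) := Real.rpow_pos_of_pos hD0 _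
  have hPle : (α+β)^α * ((x-1)*δ)^((2:ℝ)-α) ≤ (α+β) * (((x-1)*δ) * C) :=
    mul_le_mul hP1 hP2 hDpow0.le (by linarith)
  -- key polynomial inequality
  have hts : t*s ≤ (3*x-3)/2 := by nlinarith [sq_nonneg (t-s)]
  have htle : t ≤ x/8 + 2 := by nlinarith [sq_nonneg (t-4)]
  have key : 2*t*s*(x-2)^4*((x-1)+2*s) < 3*(2*x-3)*(x-1)^5 := by
    have e1 : 2*t*s*(x-2)^4*(x-1) ≤ (3*x-3)*(x-2)^4*(x-1) := by
      have hq : (0:ℝ) ≤ (x-2)^4*(x-1) := by positivity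
      have := mul_le_mul_of_nonneg_right hts hq
      linarith [this]
    have e2 : 4*t*s^2*(x-2)^4 ≤ 4*(x/8+2)*(2*x-3)*(x-2)^4 := by
      rw [hs2]
      have hq : (0:ℝ) ≤ 4*(2*x-3)*(x-2)^4 := by positivity
      have := mul_le_mul_of_nonneg_right htle hq
      linarith [this]
    have hy : (0:ℝ) ≤ x - 5 := by linarith
    have e3 : (3*x-3)*(x-2)^4*(x-1) + 4*(x/8+2)*(2*x-3)*(x-2)^4
        < 3*(2*x-3)*(x-1)^5 := by
      linarith [pow_nonneg hy 2, pow_nonneg hy 3, pow_nonneg hy 4,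
        pow_nonneg hy 5, pow_nonneg hy 6]
    linarith [e1, e2, e3]
  -- main coefficient inequality
  have hQ0 : (0:ℝ) < (α+β) * (((x-1)*δ) * C) := by
    apply mul_pos (by linarith) (mul_pos hD0 hC0)
  have stepD : 2/3*t < 4*(x-2)*((α+1)/α)*((α+1)*β/α^2) / ((α+β) * (((x-1)*δ) * C)) := by
    rw [lt_div_iff₀ hQ0]
    have hL : 2/3*t*((α+β) * (((x-1)*δ) * C))
        = (8*t*(x-2)^3*(2*x-3)*s*((x-1)+2*s)) / (3*((3*x-5)*(x-1)^4)) := by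
      rw [hAval, hDval, hCval]; field_simp; ring
    have hR : 4*(x-2)*((α+1)/α)*((α+1)*β/α^2)
        = (4*(2*x-3)^2*(x-1)) / ((3*x-5)*(x-2)) := by
      rw [hqval, hbval]; field_simp
    rw [hL, hR, div_lt_div_iff₀ (by positivity) (by positivity)]
    have h := mul_lt_mul_of_pos_right key
      (show (0:ℝ) < 4*(2*x-3)*(3*x-5) by positivity)
    linarith [h]
  have hnum0 : 0 ≤ 4*(x-2)*((α+1)/α)*((α+1)*β/α^2) := by
    have : 0 < (α+1)/α := by positivity
    positivity
  have step2 : 4*(x-2)*((α+1)/α)*((α+1)*β/α^2) / ((α+β) * (((x-1)*δ) * C))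
      ≤ 4*(x-2)*((α+1)/α)*(((α+1)*β/α^2)^α) / ((α+β)^α * ((x-1)*δ)^((2:ℝ)-α)) := by
    apply div_le_div₀ (by positivity) _ (by positivity) hPle
    have h40 : (0:ℝ) ≤ 4*(x-2)*((α+1)/α) := by positivity
    exact mul_le_mul_of_nonneg_left hBle h40
  have hmain : 2/3*t < 4*(x-2) / ((α+β)^α * ((x-1)*δ)^((2:ℝ)-α)) *
      ((α+1)/α) * (((α+1)*β/α^2)^α) := by
    have heq : 4*(x-2) / ((α+β)^α * ((x-1)*δ)^((2:ℝ)-α)) *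
        ((α+1)/α) * (((α+1)*β/α^2)^α)
        = 4*(x-2)*((α+1)/α)*(((α+1)*β/α^2)^α) / ((α+β)^α * ((x-1)*δ)^((2:ℝ)-α)) := by
      ring
    rw [heq]
    exact lt_of_lt_of_le stepD step2
  calc 2/3*Real.sqrt x * lam = 2/3*t*lam := by rw [htdef]
    _ < _ := by exact mul_lt_mul_of_pos_right hmain hlam
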